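/- arXiv:2107.03898 — 2 statements merged into one kernel-verified Lean document; each statement's English description precedes it below -/
import Mathlib

section
/- Let G be an n-player, m-action game and let G' = g_G(L) be the induced population game with L·n players, where each player v^i_ℓ for ℓ ∈ [L] receives the payoff that player i would receive in G when playing v^i_ℓ's strategy against the population averages of the other n−1 groups. If a' is an ε-approximate pure Nash equilibrium of G', then the mixed profile p* of G in which each player i plays the average (empirical distribution) of the actions of population i is an ε-well-supported Nash equilibrium of G. -/
/-!
A population player `(i, ℓ)` faces the empirical strategies of the other populations, and a
unilateral deviation of that player changes only the empirical strategy of its own population,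
which its payoff ignores. So its deviation gain in the population game is exactly player `i`'s
gain in `G` from switching between the two pure actions against the empirical profile. Every
action in the support of population `i`'s empirical strategy is played by some `(i, ℓ)`, whence
the well-supported bound.
-/

open Finset

noncomputable section

def pureStrat {m : ℕ} (j : Fin m) : Fin m → ℝ := fun j' => if j' = j then 1 else 0

def expPay {n m : ℕ} (u : (Fin n → Fin m) → ℝ) (p : Fin n → Fin m → ℝ) : ℝ :=
  ∑ a : Fin n → Fin m, (∏ i, p i (a i)) * u a

def dev {n m : ℕ} (p : Fin n → Fin m → ℝ) (i : Fin n) (j : Fin m) : Fin n → Fin m → ℝ :=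
  Function.update p i (pureStrat j)

/-- The empirical (average) mixed strategy of population `i` under the pure profile `a'`
    of the population game. -/
def emp {n L m : ℕ} (a' : Fin n × Fin L → Fin m) : Fin n → Fin m → ℝ :=
  fun i j => ((univ.filter fun ℓ : Fin L => a' (i, ℓ) = j).card : ℝ) / L

/-- Payoff to player `v = (i,ℓ)` of the induced population game `g_G(L)`: player `i`'s payoff
    in `G` when playing `v`'s action against the population averages of the other groups. -/
def popPay {n L m : ℕ} (u : Fin n → (Fin n → Fin m) → ℝ) (v : Fin n × Fin L)
    (a' : Fin n × Fin L → Fin m) : ℝ :=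
  expPay (u v.1) (Function.update (emp a') v.1 (pureStrat (a' v)))

theorem exists_apply_eq_of_emp_pos {n L m : ℕ} {a' : Fin n × Fin L → Fin m} {i : Fin n}
    {j : Fin m} (h : 0 < emp a' i j) : ∃ ℓ : Fin L, a' (i, ℓ) = j := by
  by_contra! hne
  have hempty : (univ.filter fun ℓ : Fin L => a' (i, ℓ) = j) = ∅ :=
    filter_eq_empty_iff.mpr fun ℓ _ => hne ℓ
  simp [emp, hempty] at h

theorem emp_update_of_fst_ne {n L m : ℕ} (a' : Fin n × Fin L → Fin m) (v : Fin n × Fin L)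
    (j : Fin m) {i : Fin n} (hi : i ≠ v.1) : emp (Function.update a' v j) i = emp a' i := by
  funext j'
  simp only [emp]
  congr 3
  refine filter_congr fun ℓ _ => ?_
  rw [Function.update_of_ne fun h => hi (congrArg Prod.fst h)]

theorem dev_congr {n m : ℕ} {p q : Fin n → Fin m → ℝ} {i : Fin n}
    (h : ∀ i' ≠ i, p i' = q i') (j : Fin m) : dev p i j = dev q i j := by
  funext i'
  by_cases hi : i' = i
  · subst hi
    simp [dev]
  · simp only [dev, Function.update_of_ne hi, h i' hi]

theorem popPay_eq_expPay_dev {n L m : ℕ} (u : Fin n → (Fin n → Fin m) → ℝ)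
    (v : Fin n × Fin L) (a' : Fin n × Fin L → Fin m) :
    popPay u v a' = expPay (u v.1) (dev (emp a') v.1 (a' v)) :=
  rfl

theorem popPay_update_self {n L m : ℕ} (u : Fin n → (Fin n → Fin m) → ℝ)
    (v : Fin n × Fin L) (a' : Fin n × Fin L → Fin m) (j : Fin m) :
    popPay u v (Function.update a' v j) = expPay (u v.1) (dev (emp a') v.1 j) := by
  rw [popPay_eq_expPay_dev, Function.update_self,
    dev_congr (fun i hi => emp_update_of_fst_ne a' v j hi)]

theorem population_PNE_gives_WSNE_general (n L m : ℕ) (ε : ℝ)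
    (u : Fin n → (Fin n → Fin m) → ℝ) (a' : Fin n × Fin L → Fin m)
    (hPNE : ∀ (v : Fin n × Fin L) (j : Fin m),
      popPay u v (Function.update a' v j) - popPay u v a' ≤ ε) :
    ∀ (i : Fin n) (j : Fin m), 0 < emp a' i j →
      ∀ j' : Fin m, expPay (u i) (dev (emp a') i j') - expPay (u i) (dev (emp a') i j) ≤ ε := by
  intro i j hsupp j'
  obtain ⟨ℓ, hℓ⟩ := exists_apply_eq_of_emp_pos hsupp
  have hgain := hPNE (i, ℓ) j'
  rwa [popPay_update_self, popPay_eq_expPay_dev, hℓ] at hgain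

/-- If `a'` is an ε-approximate pure Nash equilibrium of the induced population game
    `g_G(L)`, then the profile where each player of `G` plays the empirical distribution of
    its population is an ε-well-supported Nash equilibrium of `G`. -/
theorem population_PNE_gives_WSNE (n L m : ℕ) (hL : 0 < L) (ε : ℝ)
    (u : Fin n → (Fin n → Fin m) → ℝ) (a' : Fin n × Fin L → Fin m)
    (hPNE : ∀ (v : Fin n × Fin L) (j : Fin m),
      popPay u v (Function.update a' v j) - popPay u v a' ≤ ε) :
    ∀ (i : Fin n) (j : Fin m), 0 < emp a' i j →
      ∀ j' : Fin m, expPay (u i) (dev (emp a') i j') - expPay (u i) (dev (emp a') i j) ≤ ε :=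
  population_PNE_gives_WSNE_general n L m ε u a' hPNE
end
end

section
/- Let X be a joint distribution over action profiles of the 2-player, m-action generalized Matching Pennies game (player 1 wants to match, player 2 wants to mismatch), let α > 0, ε = (m−1)/m − α, and ρ = ((2−α)m − 1)/(2m). If for some action j, Pr_{(a₁,a₂)∼X}(a₁ = j, a₂ = j) > ρ, then player 2 has a constant deviation φ with reg₂^{(φ)}(X) > ε; hence X is not an ε-approximate correlated equilibrium. -/
/-!
Player 2 deviates to a constant action `j'` that player 1 rarely plays: the regret of this
deviation is the mass of the diagonal minus the marginal of player 1 on `j'`. The diagonal carries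
more than `ρ`, so player 1's marginal leaves less than `1 - ρ` for the other `m - 1` actions, and
one of them gets less than `(1 - ρ) / (m - 1)`; the regret is then above `(ρ m - 1) / (m - 1) ≥ ε`.
-/

open Finset

noncomputable section

/-- Player 1's payoff in the 2-player generalized Matching Pennies game: 1 iff the actions match. -/
def u1 {m : ℕ} (a : Fin m × Fin m) : ℝ := if a.1 = a.2 then 1 else 0

/-- Player 2's payoff: 1 iff the actions differ. -/
def u2 {m : ℕ} (a : Fin m × Fin m) : ℝ := if a.1 = a.2 then 0 else 1

theorem exists_ne_lt_of_sum_sub_lt {ι : Type*} [Fintype ι] [DecidableEq ι] {f : ι → ℝ} {j : ι}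
    {c : ℝ} (h : ∑ i, f i - f j < ((Fintype.card ι : ℝ) - 1) * c) : ∃ i ≠ j, f i < c := by
  have hcard : ((univ.erase j).card : ℝ) = Fintype.card ι - 1 := by
    rw [card_erase_of_mem (mem_univ j), Nat.cast_sub (card_pos.2 ⟨j, mem_univ j⟩), card_univ,
      Nat.cast_one]
  obtain ⟨i, hi, hlt⟩ : ∃ i ∈ univ.erase j, f i < c := by
    refine exists_lt_of_sum_lt ?_
    rwa [sum_erase_eq_sub (mem_univ j), sum_const, nsmul_eq_mul, hcard]
  exact ⟨i, ne_of_mem_erase hi, hlt⟩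

theorem sum_mul_u2_deviation {m : ℕ} (X : Fin m × Fin m → ℝ) (φ : Fin m → Fin m) :
    ∑ a, X a * u2 (a.1, φ a.2) = ∑ a, X a - ∑ b, X (φ b, b) := by
  have hpoint : ∀ a : Fin m × Fin m,
      X a * u2 (a.1, φ a.2) = X a - if a.1 = φ a.2 then X a else 0 := by
    intro a
    unfold u2
    split_ifs <;> ring
  rw [sum_congr rfl fun a _ => hpoint a, sum_sub_distrib,
    Fintype.sum_prod_type_right (f := fun a => if a.1 = φ a.2 then X a else 0)]
  simp only [sum_ite_eq', mem_univ, if_true]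

theorem regret_u2_eq {m : ℕ} (X : Fin m × Fin m → ℝ) (φ : Fin m → Fin m) :
    ∑ a, X a * u2 (a.1, φ a.2) - ∑ a, X a * u2 a = ∑ k, X (k, k) - ∑ b, X (φ b, b) := by
  have hdiag : ∑ a, X a * u2 a = ∑ a, X a - ∑ k, X (k, k) := sum_mul_u2_deviation X id
  rw [sum_mul_u2_deviation X φ, hdiag]
  ring

theorem le_sub_div_of_matching_threshold {m : ℕ} (hm : 2 ≤ m) {α ρ : ℝ} (hα : 0 ≤ α)
    (hρ : ρ = ((2 - α) * m - 1) / (2 * m)) :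
    ((m : ℝ) - 1) / m - α ≤ ρ - (1 - ρ) / (m - 1) := by
  have hm' : (2 : ℝ) ≤ m := by exact_mod_cast hm
  have hm0 : (m : ℝ) ≠ 0 := by positivity
  have hm1 : (m : ℝ) - 1 ≠ 0 := by linarith
  have key : ρ - (1 - ρ) / (m - 1) - (((m : ℝ) - 1) / m - α)
      = (m - 2) * (α * m + 1) / (2 * m * (m - 1)) := by
    rw [hρ]
    field_simp
    ring
  rw [← sub_nonneg, key]
  apply div_nonneg <;> apply mul_nonneg <;> nlinarith

/-- If a correlated strategy of the 2-player generalized Matching Pennies game places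
    probability more than ρ = ((2−α)m−1)/(2m) on some matched pair (j,j), then player 2 has a
    constant deviation with regret exceeding ε = (m−1)/m − α; hence X is not an
    ε-approximate correlated equilibrium. -/
theorem matched_pair_breaks_ACE (m : ℕ) (hm : 2 ≤ m) (α ε ρ : ℝ) (hα : 0 < α)
    (hε : ε = ((m : ℝ) - 1) / m - α) (hρ : ρ = ((2 - α) * m - 1) / (2 * m))
    (X : Fin m × Fin m → ℝ) (hX0 : ∀ a, 0 ≤ X a) (hX1 : ∑ a : Fin m × Fin m, X a = 1)
    (j : Fin m) (hj : ρ < X (j, j)) :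
    (∃ j' : Fin m,
      (∑ a : Fin m × Fin m, X a * u2 (a.1, j')) - (∑ a : Fin m × Fin m, X a * u2 a) > ε) ∧
    ¬ (∀ φ : Fin m → Fin m,
      (∑ a : Fin m × Fin m, X a * u2 (a.1, φ a.2)) - (∑ a : Fin m × Fin m, X a * u2 a) ≤ ε) := by
  have hm1 : (m : ℝ) - 1 ≠ 0 := by
    have : (2 : ℝ) ≤ m := by exact_mod_cast hm
    linarith
  have hrow : X (j, j) ≤ ∑ b, X (j, b) := single_le_sum (fun b _ => hX0 (j, b)) (mem_univ j)
  have hdiag : X (j, j) ≤ ∑ k, X (k, k) := single_le_sum (fun k _ => hX0 (k, k)) (mem_univ j)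
  obtain ⟨j', -, hj'⟩ := exists_ne_lt_of_sum_sub_lt (f := fun k => ∑ b, X (k, b)) (j := j)
    (c := (1 - ρ) / (m - 1)) (by
      rw [← Fintype.sum_prod_type, hX1, Fintype.card_fin, mul_div_cancel₀ _ hm1]
      linarith)
  have hregret : ∑ a, X a * u2 (a.1, j') - ∑ a, X a * u2 a > ε := by
    rw [regret_u2_eq X fun _ => j', hε]
    linarith [le_sub_div_of_matching_threshold hm hα.le hρ]
  exact ⟨⟨j', hregret⟩, fun h => (h fun _ => j').not_gt hregret⟩
end
end
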